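/- Let K ⊂ ℝ^d be compact, and suppose for every pair x,y ∈ K with |x−y| ≤ δ there is a path of action at most L|x−y| from x to y, and a finite δ-net {x_i} of K such that each pair (x_i, x_j) is joined by a path with action ≤ V⁺(x_i,x_j) + γ/2, where each such path has finite duration. Then there exists T₀ < ∞ such that for all x, y ∈ K there exists a path φ : [0,T] → ℝ^d, T ≤ T₀, with φ_0 = x, φ_T = y, and S(φ) ≤ V⁺(x,y) + γ, provided δ is chosen small enough that 2Lδ ≤ γ/4 and |V⁺(x_i,x_j) − V⁺(x,y)| ≤ γ/4 for x near x_i, y near x_j. -/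

import Mathlib

/-!
Join `x` to a net point `i` within `δ`, follow the near-optimal net path from `i` to the net point
`j` near `y`, then go from `j` to `y`. The two short legs cost at most `2Lδ ≤ γ/4` and the net path
at most `V(i,j) + γ/2 ≤ V(x,y) + 3γ/4`. Since the net is finite, the durations of the net paths
are bounded, which gives the uniform `T₀`.
-/

lemma detour_action_le {L δ γ a b v w : ℝ} (hL : 0 ≤ L) (ha : a ≤ δ) (hb : b ≤ δ)
    (hvw : |v - w| ≤ γ / 4) (hδγ : 2 * L * δ ≤ γ / 4) :
    L * a + (v + γ / 2) + L * b ≤ w + γ := by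
  have hLa := mul_le_mul_of_nonneg_left ha hL
  have hLb := mul_le_mul_of_nonneg_left hb hL
  linarith [(abs_le.1 hvw).2]

lemma path_of_detour {α : Type*} [PseudoMetricSpace α] {K : Set α}
    {A : α → α → ℝ → ℝ → Prop} {V : α → α → ℝ} {L δ γ T : ℝ} (hL : 0 ≤ L)
    (hconcat : ∀ x y z T₁ T₂ r₁ r₂, A x y T₁ r₁ → A y z T₂ r₂ → A x z (T₁ + T₂) (r₁ + r₂))
    (hmono : ∀ x y T r r', r ≤ r' → A x y T r → A x y T r')
    (hnear : ∀ x ∈ K, ∀ y ∈ K, dist x y ≤ δ → A x y (dist x y) (L * dist x y))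
    {x y i j : α} (hx : x ∈ K) (hy : y ∈ K) (hi : i ∈ K) (hj : j ∈ K)
    (hxi : dist x i ≤ δ) (hyj : dist y j ≤ δ) (hij : A i j T (V i j + γ / 2))
    (hV : |V i j - V x y| ≤ γ / 4) (hδγ : 2 * L * δ ≤ γ / 4) :
    A x y (dist x i + T + dist j y) (V x y + γ) := by
  rw [dist_comm] at hyj
  have hxj := hconcat _ _ _ _ _ _ _ (hnear x hx i hi hxi) hij
  have hxy := hconcat _ _ _ _ _ _ _ hxj (hnear j hj y hy hyj)
  exact hmono _ _ _ _ _ (detour_action_le hL hxi hyj hV hδγ) hxy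

theorem uniform_time_quasipotential_general {d : ℕ}
    (K : Set (EuclideanSpace ℝ (Fin d)))
    (A : EuclideanSpace ℝ (Fin d) → EuclideanSpace ℝ (Fin d) → ℝ → ℝ → Prop)
    (V : EuclideanSpace ℝ (Fin d) → EuclideanSpace ℝ (Fin d) → ℝ)
    (L δ γ : ℝ) (hL : 0 < L)
    (hconcat : ∀ x y z T₁ T₂ r₁ r₂,
      A x y T₁ r₁ → A y z T₂ r₂ → A x z (T₁ + T₂) (r₁ + r₂))
    (hmono : ∀ x y T r r', r ≤ r' → A x y T r → A x y T r')
    (hnear : ∀ x ∈ K, ∀ y ∈ K, dist x y ≤ δ → A x y (dist x y) (L * dist x y))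
    (net : Finset (EuclideanSpace ℝ (Fin d))) (hnetK : ↑net ⊆ K)
    (hcover : ∀ x ∈ K, ∃ i ∈ net, dist x i ≤ δ)
    (Tnet : EuclideanSpace ℝ (Fin d) → EuclideanSpace ℝ (Fin d) → ℝ)
    (hnetpath : ∀ i ∈ net, ∀ j ∈ net, A i j (Tnet i j) (V i j + γ / 2))
    (hVcont : ∀ x ∈ K, ∀ y ∈ K, ∀ i ∈ net, ∀ j ∈ net,
      dist x i ≤ δ → dist y j ≤ δ → |V i j - V x y| ≤ γ / 4)
    (hδγ : 2 * L * δ ≤ γ / 4) :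
    ∃ T₀ : ℝ, ∀ x ∈ K, ∀ y ∈ K, ∃ T : ℝ, T ≤ T₀ ∧ A x y T (V x y + γ) := by
  obtain ⟨M, hM⟩ := ((net ×ˢ net).image fun p => Tnet p.1 p.2).bddAbove
  refine ⟨δ + M + δ, fun x hx y hy => ?_⟩
  obtain ⟨i, hi, hxi⟩ := hcover x hx
  obtain ⟨j, hj, hyj⟩ := hcover y hy
  have hTij : Tnet i j ≤ M :=
    hM (Finset.mem_image.2 ⟨(i, j), Finset.mem_product.2 ⟨hi, hj⟩, rfl⟩)
  refine ⟨_, ?_, path_of_detour hL.le hconcat hmono hnear hx hy (hnetK hi) (hnetK hj) hxi hyj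
    (hnetpath i hi j hj) (hVcont x hx y hy i hi j hj hxi hyj) hδγ⟩
  rw [dist_comm j y]
  gcongr

/-- Lemma 3.2 (uniform time to nearly realize the quasi-potential), in abstract
form. `A x y T r` means "there is a path from `x` to `y` of duration `T` and
action at most `r`"; it is additive under concatenation and monotone in the
action bound. If nearby points of the compact set `K` are joined by paths of
duration `dist x y` and action `≤ L·dist x y`, and the points of a finite
`δ`-net are pairwise joined by finite-duration paths of action
`≤ V(i,j) + γ/2`, with `2Lδ ≤ γ/4` and `|V(i,j) − V(x,y)| ≤ γ/4` for `x,y`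
`δ`-close to `i,j`, then there is `T₀ < ∞` such that any `x,y ∈ K` are joined
by a path of duration `T ≤ T₀` and action `≤ V(x,y) + γ`. -/
theorem uniform_time_quasipotential {d : ℕ}
    (K : Set (EuclideanSpace ℝ (Fin d))) (hK : IsCompact K)
    (A : EuclideanSpace ℝ (Fin d) → EuclideanSpace ℝ (Fin d) → ℝ → ℝ → Prop)
    (V : EuclideanSpace ℝ (Fin d) → EuclideanSpace ℝ (Fin d) → ℝ)
    (L δ γ : ℝ) (hL : 0 < L) (hδ : 0 < δ) (hγ : 0 < γ)
    (hconcat : ∀ x y z T₁ T₂ r₁ r₂,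
      A x y T₁ r₁ → A y z T₂ r₂ → A x z (T₁ + T₂) (r₁ + r₂))
    (hmono : ∀ x y T r r', r ≤ r' → A x y T r → A x y T r')
    (hnear : ∀ x ∈ K, ∀ y ∈ K, dist x y ≤ δ → A x y (dist x y) (L * dist x y))
    (net : Finset (EuclideanSpace ℝ (Fin d))) (hnetK : ↑net ⊆ K)
    (hcover : ∀ x ∈ K, ∃ i ∈ net, dist x i ≤ δ)
    (Tnet : EuclideanSpace ℝ (Fin d) → EuclideanSpace ℝ (Fin d) → ℝ)
    (hTnet : ∀ i ∈ net, ∀ j ∈ net, 0 ≤ Tnet i j)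
    (hnetpath : ∀ i ∈ net, ∀ j ∈ net, A i j (Tnet i j) (V i j + γ / 2))
    (hVcont : ∀ x ∈ K, ∀ y ∈ K, ∀ i ∈ net, ∀ j ∈ net,
      dist x i ≤ δ → dist y j ≤ δ → |V i j - V x y| ≤ γ / 4)
    (hδγ : 2 * L * δ ≤ γ / 4) :
    ∃ T₀ : ℝ, ∀ x ∈ K, ∀ y ∈ K, ∃ T : ℝ, T ≤ T₀ ∧ A x y T (V x y + γ) :=
  uniform_time_quasipotential_general K A V L δ γ hL hconcat hmono hnear net hnetK hcover Tnet
    hnetpath hVcont hδγ
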